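/- arXiv:2001.06655 — 4 statements merged into one kernel-verified Lean document; each statement's English description precedes it below -/
import Mathlib

section
/- For the operators S*_{n,a}, one has S*_{n,a}(e_3; x) = x·log(a)·((a^(1/n)−1)² + 3(a^(1/n)−1)·x·log a + x²(log a)²) / ((a^(1/n)−1)³ · n³) for all x ≥ 0, where e_3(t) = t³. -/
/-!
With `y = x log a / (a^{1/n} - 1)`, the weights of `S*_{n,a}` are the Poisson weights
`e^{-y} y^k / k!`, so `S*_{n,a}(e_3; x)` is `n⁻³` times the third moment of a Poisson law of
mean `y`. Writing `k³ = k^{(3)} + 3 k^{(2)} + k^{(1)}` in falling factorials and using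
`∑ k^{(j)} y^k / k! = y^j e^y` gives the moment `y³ + 3y² + y`.
-/

open Real Filter

noncomputable def szasz (a : ℝ) (n : ℕ) (f : ℝ → ℝ) (x : ℝ) : ℝ :=
  ∑' k : ℕ, a ^ (-x / (a ^ ((1:ℝ)/n) - 1)) *
    (x * Real.log a) ^ k / ((a ^ ((1:ℝ)/n) - 1) ^ k * (Nat.factorial k : ℝ)) * f (k / n)

open Nat

theorem hasSum_descFactorial_mul_pow_div_factorial {𝕂 : Type*} [RCLike 𝕂] (j : ℕ) (z : 𝕂) :
    HasSum (fun k : ℕ => (k.descFactorial j : 𝕂) * z ^ k / k !) (z ^ j * NormedSpace.exp z) := by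
  refine (hasSum_nat_add_iff' j).mp ?_
  have hlow : ∑ k ∈ Finset.range j, (k.descFactorial j : 𝕂) * z ^ k / k ! = 0 :=
    Finset.sum_eq_zero fun k hk => by
      simp [descFactorial_eq_zero_iff_lt.mpr (Finset.mem_range.mp hk)]
  rw [hlow, sub_zero]
  suffices hshift : (fun m => ((m + j).descFactorial j : 𝕂) * z ^ (m + j) / (m + j)!) =
      fun m => z ^ j * (z ^ m / m !) by
    rw [hshift]
    exact (NormedSpace.expSeries_div_hasSum_exp z).mul_left (z ^ j)
  funext m
  have hfac : ((m + j)! : 𝕂) = m ! * (m + j).descFactorial j := by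
    have h := factorial_mul_descFactorial (Nat.le_add_left j m)
    rw [Nat.add_sub_cancel] at h
    exact_mod_cast h.symm
  have hdesc : ((m + j).descFactorial j : 𝕂) ≠ 0 := by
    exact_mod_cast (descFactorial_eq_zero_iff_lt.not.mpr (by omega))
  rw [hfac, pow_add]
  field_simp

theorem cube_eq_descFactorial (k : ℕ) :
    k ^ 3 = k.descFactorial 3 + 3 * k.descFactorial 2 + k.descFactorial 1 := by
  rcases k with _ | _ | _ | k <;> simp [descFactorial_succ]; ring

theorem hasSum_cube_mul_pow_div_factorial (y : ℝ) :
    HasSum (fun k : ℕ => (k : ℝ) ^ 3 * y ^ k / k !) ((y ^ 3 + 3 * y ^ 2 + y) * exp y) := by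
  have h := ((hasSum_descFactorial_mul_pow_div_factorial 3 y).add
    ((hasSum_descFactorial_mul_pow_div_factorial 2 y).mul_left 3)).add
    (hasSum_descFactorial_mul_pow_div_factorial 1 y)
  rw [← Real.exp_eq_exp_ℝ] at h
  have hcube : (fun k : ℕ => (k : ℝ) ^ 3 * y ^ k / k !) = fun k =>
      (k.descFactorial 3 : ℝ) * y ^ k / k ! + 3 * ((k.descFactorial 2 : ℝ) * y ^ k / k !) +
        (k.descFactorial 1 : ℝ) * y ^ k / k ! := by
    funext k
    rw [← cast_pow, cube_eq_descFactorial]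
    push_cast
    ring
  have hvalue : (y ^ 3 + 3 * y ^ 2 + y) * exp y =
      y ^ 3 * exp y + 3 * (y ^ 2 * exp y) + y ^ 1 * exp y := by
    ring
  rw [hcube, hvalue]
  exact h

noncomputable def szaszParam (a : ℝ) (n : ℕ) (x : ℝ) : ℝ :=
  x * log a / (a ^ ((1:ℝ)/n) - 1)

theorem szasz_eq_tsum_exp_neg {a : ℝ} (ha : 0 < a) (n : ℕ) (f : ℝ → ℝ) (x : ℝ) :
    szasz a n f x =
      ∑' k : ℕ, exp (-szaszParam a n x) * szaszParam a n x ^ k / k ! * f (k / n) := by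
  refine tsum_congr fun k => ?_
  rw [szaszParam, rpow_def_of_pos ha, div_pow, mul_div_assoc, mul_div_assoc, div_div]
  ring_nf

theorem hasSum_exp_neg_mul_pow_div_factorial_mul_cube (y m : ℝ) :
    HasSum (fun k : ℕ => exp (-y) * y ^ k / k ! * (k / m) ^ 3)
      ((y ^ 3 + 3 * y ^ 2 + y) / m ^ 3) := by
  have hterm : (fun k : ℕ => exp (-y) * y ^ k / k ! * (k / m) ^ 3) =
      fun k : ℕ => exp (-y) / m ^ 3 * ((k : ℝ) ^ 3 * y ^ k / k !) :=
    funext fun k => by ring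
  have hvalue : exp (-y) / m ^ 3 * ((y ^ 3 + 3 * y ^ 2 + y) * exp y) =
      (y ^ 3 + 3 * y ^ 2 + y) / m ^ 3 := by
    rw [exp_neg]
    field_simp
  rw [hterm, ← hvalue]
  exact (hasSum_cube_mul_pow_div_factorial y).mul_left _

theorem szasz_cube {a : ℝ} (ha : 0 < a) (n : ℕ) (x : ℝ) :
    szasz a n (fun t => t ^ 3) x =
      (szaszParam a n x ^ 3 + 3 * szaszParam a n x ^ 2 + szaszParam a n x) / n ^ 3 := by
  rw [szasz_eq_tsum_exp_neg ha]
  exact (hasSum_exp_neg_mul_pow_div_factorial_mul_cube _ _).tsum_eq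

theorem stmt_4_general (a : ℝ) (ha : 1 < a) (n : ℕ) (hn : 1 ≤ n) (x : ℝ) :
    szasz a n (fun t => t ^ 3) x =
      x * Real.log a * ((a ^ ((1:ℝ)/n) - 1) ^ 2
        + 3 * (a ^ ((1:ℝ)/n) - 1) * (x * Real.log a)
        + x ^ 2 * Real.log a ^ 2) /
        ((a ^ ((1:ℝ)/n) - 1) ^ 3 * n ^ 3) := by
  have hc : a ^ ((1:ℝ)/n) - 1 ≠ 0 :=
    (sub_pos.mpr (one_lt_rpow ha (one_div_pos.mpr (Nat.cast_pos.mpr hn)))).ne'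
  rw [szasz_cube (by positivity) n x, szaszParam]
  field_simp
  ring

theorem stmt_4 (a : ℝ) (ha : 1 < a) (n : ℕ) (hn : 1 ≤ n) (x : ℝ) (hx : 0 ≤ x) :
    szasz a n (fun t => t ^ 3) x =
      x * Real.log a * ((a ^ ((1:ℝ)/n) - 1) ^ 2
        + 3 * (a ^ ((1:ℝ)/n) - 1) * (x * Real.log a)
        + x ^ 2 * Real.log a ^ 2) /
        ((a ^ ((1:ℝ)/n) - 1) ^ 3 * n ^ 3) :=
  stmt_4_general a ha n hn x
end

section
/- The second central moment of S*_{n,a} satisfies S*_{n,a}((t−x)²; x) = x·((a^(1/n)−1)²·n²·x − (a^(1/n)−1)·(2nx − 1)·log a + x·(log a)²) / ((a^(1/n)−1)²·n²) for all x ≥ 0. -/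
open Real Filter

/-! With `y = x log a / (a^(1/n) - 1)` the operator is `∑ₖ e^{-y} yᵏ/k! f(k/n)`, i.e. the expectation
of `f(K/n)` for `K` Poisson distributed with mean `y`. The second central moment therefore follows
from `E K = y` and `E K² = y² + y`, both obtained from the exponential series through the shift
`(k+1) y^(k+1)/(k+1)! = y · yᵏ/k!`. -/

open scoped Nat

theorem hasSum_pow_div_factorial_exp (y : ℝ) : HasSum (fun k : ℕ => y ^ k / k !) (exp y) :=
  exp_eq_exp_ℝ ▸ NormedSpace.expSeries_div_hasSum_exp y

theorem hasSum_natCast_mul_pow_div_factorial {f : ℕ → ℝ} {s : ℝ} (y : ℝ)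
    (hf : HasSum (fun k : ℕ => f (k + 1) * (y ^ k / k !)) s) :
    HasSum (fun k : ℕ => k * f k * (y ^ k / k !)) (y * s) := by
  rw [← hasSum_nat_add_iff' 1]
  simp only [Finset.range_one, Finset.sum_singleton, CharP.cast_eq_zero, zero_mul, sub_zero]
  refine (hf.mul_left y).congr_fun fun k => ?_
  rw [Nat.factorial_succ]
  push_cast
  field_simp
  ring

theorem hasSum_natCast_mul_pow_div_factorial_exp (y : ℝ) :
    HasSum (fun k : ℕ => (k : ℝ) * (y ^ k / k !)) (y * exp y) := by
  simpa using hasSum_natCast_mul_pow_div_factorial (f := fun _ => 1) y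
    (by simpa using hasSum_pow_div_factorial_exp y)

theorem hasSum_natCast_sq_mul_pow_div_factorial_exp (y : ℝ) :
    HasSum (fun k : ℕ => (k : ℝ) ^ 2 * (y ^ k / k !)) ((y ^ 2 + y) * exp y) := by
  have hf : HasSum (fun k => ((k + 1 : ℕ) : ℝ) * (y ^ k / k !)) (y * exp y + exp y) := by
    refine ((hasSum_natCast_mul_pow_div_factorial_exp y).add
      (hasSum_pow_div_factorial_exp y)).congr_fun fun k => ?_
    push_cast
    ring
  rw [show (y ^ 2 + y) * exp y = y * (y * exp y + exp y) by ring]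
  exact (hasSum_natCast_mul_pow_div_factorial (f := fun k => (k : ℝ)) y hf).congr_fun
    fun k => by ring

theorem hasSum_exp_neg_mul_pow_div_factorial_mul_sq_sub (y c r : ℝ) :
    HasSum (fun k : ℕ => exp (-y) * (y ^ k / k !) * (k / r - c) ^ 2)
      ((y ^ 2 + y) / r ^ 2 - 2 * c * y / r + c ^ 2) := by
  have h := (((hasSum_natCast_sq_mul_pow_div_factorial_exp y).div_const (r ^ 2)).sub
      ((hasSum_natCast_mul_pow_div_factorial_exp y).mul_left (2 * c / r))).add
    ((hasSum_pow_div_factorial_exp y).mul_left (c ^ 2))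
  have hE : exp (-y) * exp y = 1 := by rw [← exp_add, neg_add_cancel, exp_zero]
  rw [show (y ^ 2 + y) / r ^ 2 - 2 * c * y / r + c ^ 2 = exp (-y) *
      ((y ^ 2 + y) * exp y / r ^ 2 - 2 * c / r * (y * exp y) + c ^ 2 * exp y) by
    linear_combination (-((y ^ 2 + y) / r ^ 2 - 2 * c * y / r + c ^ 2)) * hE]
  exact (h.mul_left _).congr_fun fun k => by ring

theorem szasz_eq_tsum_exp_neg_mul_pow_div_factorial {a : ℝ} (ha : 0 < a) (n : ℕ) (f : ℝ → ℝ)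
    (x : ℝ) :
    szasz a n f x = ∑' k : ℕ, exp (-(x * log a / (a ^ ((1:ℝ)/n) - 1))) *
      ((x * log a / (a ^ ((1:ℝ)/n) - 1)) ^ k / k !) * f (k / n) := by
  refine tsum_congr fun k => ?_
  rw [rpow_def_of_pos ha, div_pow, mul_div_assoc, div_div]
  ring_nf

theorem stmt_10_general (a : ℝ) (ha : 1 < a) (n : ℕ) (hn : 1 ≤ n) (x : ℝ) :
    szasz a n (fun t => (t - x) ^ 2) x =
      x * ((a ^ ((1:ℝ)/n) - 1) ^ 2 * n ^ 2 * x
        - (a ^ ((1:ℝ)/n) - 1) * (2 * n * x - 1) * Real.log a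
        + x * Real.log a ^ 2) / ((a ^ ((1:ℝ)/n) - 1) ^ 2 * n ^ 2) := by
  have hn0 : (n : ℝ) ≠ 0 := by positivity
  have hb : a ^ ((1:ℝ)/n) - 1 ≠ 0 :=
    (sub_pos.mpr (one_lt_rpow ha (by positivity))).ne'
  rw [szasz_eq_tsum_exp_neg_mul_pow_div_factorial (by linarith),
    (hasSum_exp_neg_mul_pow_div_factorial_mul_sq_sub _ x n).tsum_eq]
  field_simp
  ring

theorem stmt_10 (a : ℝ) (ha : 1 < a) (n : ℕ) (hn : 1 ≤ n) (x : ℝ) (hx : 0 ≤ x) :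
    szasz a n (fun t => (t - x) ^ 2) x =
      x * ((a ^ ((1:ℝ)/n) - 1) ^ 2 * n ^ 2 * x
        - (a ^ ((1:ℝ)/n) - 1) * (2 * n * x - 1) * Real.log a
        + x * Real.log a ^ 2) / ((a ^ ((1:ℝ)/n) - 1) ^ 2 * n ^ 2) :=
  stmt_10_general a ha n hn x
end

section
/- For a > 1, lim_{n→∞} n²·S*_{n,a}((t−x)⁴; x) = 3x², uniformly for x in any compact interval [0, b] with b > 0. -/
/-
The Szász weights are Poisson weights: `a^{-x/c} (x log a)^k / (c^k k!) = e^{-λ} λ^k / k!`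
with `c = a^{1/n} - 1` and `λ = x log a / c = n x ρₙ`, where `ρₙ = t / (e^t - 1)` at `t = log a / n`.
Since the factorial moments of a Poisson law are `E[K(K-1)⋯(K-j+1)] = λ^j`, expanding `(k/n - x)^4` in
descending factorials of `k` gives
`n² S*ₙ((t-x)⁴; x) = n²(1-ρₙ)⁴ x⁴ + 6nρₙ(1-ρₙ)² x³ + (7ρₙ² - 4ρₙ) x² + (ρₙ/n) x`.
From `1 - t ≤ t / (e^t - 1) ≤ 1` we get `ρₙ → 1` and `0 ≤ n(1-ρₙ) ≤ log a`, so the four coefficients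
tend to `0, 0, 3, 0`, and a polynomial with convergent coefficients converges uniformly on `[0, b]`.
-/

open Real Filter

open Topology Set
open scoped Nat

theorem hasSum_poisson_mul_descFactorial (l : ℝ) (j : ℕ) :
    HasSum (fun k : ℕ => exp (-l) * l ^ k / k ! * k.descFactorial j) (l ^ j) := by
  have hshift : HasSum (fun m : ℕ => l ^ (m + j) / (m + j)! * (m + j).descFactorial j)
      (l ^ j * exp l) := by
    rw [Real.exp_eq_exp_ℝ]
    refine ((NormedSpace.expSeries_div_hasSum_exp l).mul_left (l ^ j)).congr_fun fun m => ?_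
    rw [← Nat.factorial_mul_descFactorial (Nat.le_add_left j m), Nat.add_sub_cancel]
    push_cast
    field_simp
    ring
  have hlow : ∑ i ∈ Finset.range j, l ^ i / i ! * (i.descFactorial j : ℝ) = 0 :=
    Finset.sum_eq_zero fun i hi => by
      simp [Nat.descFactorial_eq_zero_iff_lt.2 (Finset.mem_range.1 hi)]
  rw [hasSum_nat_add_iff (f := fun k : ℕ => l ^ k / k ! * (k.descFactorial j : ℝ)), hlow,
    add_zero] at hshift
  have hexp : exp (-l) * (l ^ j * exp l) = l ^ j := by
    rw [mul_left_comm, ← exp_add, neg_add_cancel, exp_zero, mul_one]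
  exact hexp ▸ (hshift.mul_left (exp (-l))).congr_fun fun k => by ring

theorem hasSum_poisson_mul_div_sub_pow_four (l m x : ℝ) :
    HasSum (fun k : ℕ => exp (-l) * l ^ k / k ! * (k / m - x) ^ 4)
      (x ^ 4 + (1 / m ^ 4 - 4 * x / m ^ 3 + 6 * x ^ 2 / m ^ 2 - 4 * x ^ 3 / m) * l
        + (7 / m ^ 4 - 12 * x / m ^ 3 + 6 * x ^ 2 / m ^ 2) * l ^ 2
        + (6 / m ^ 4 - 4 * x / m ^ 3) * l ^ 3 + 1 / m ^ 4 * l ^ 4) := by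
  have P := hasSum_poisson_mul_descFactorial l
  -- `k^2, k^3, k^4` in descending factorials: the Stirling numbers `1 1`, `1 3 1`, `1 7 6 1`
  have hsum := (((((P 0).mul_left (x ^ 4)).add
    ((P 1).mul_left (1 / m ^ 4 - 4 * x / m ^ 3 + 6 * x ^ 2 / m ^ 2 - 4 * x ^ 3 / m))).add
    ((P 2).mul_left (7 / m ^ 4 - 12 * x / m ^ 3 + 6 * x ^ 2 / m ^ 2))).add
    ((P 3).mul_left (6 / m ^ 4 - 4 * x / m ^ 3))).add ((P 4).mul_left (1 / m ^ 4))
  rw [pow_zero, mul_one, pow_one] at hsum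
  refine hsum.congr_fun fun k => ?_
  simp only [← descPochhammer_eval_eq_descFactorial, descPochhammer_succ_right,
    descPochhammer_zero, Polynomial.eval_mul, Polynomial.eval_sub, Polynomial.eval_X,
    Polynomial.eval_natCast, Polynomial.eval_one]
  push_cast
  ring

theorem szasz_eq_tsum_poisson {a : ℝ} (ha : 0 < a) (n : ℕ) (f : ℝ → ℝ) (x : ℝ) :
    szasz a n f x = ∑' k : ℕ, exp (-(x * log a / (a ^ ((1:ℝ)/n) - 1))) *
      (x * log a / (a ^ ((1:ℝ)/n) - 1)) ^ k / k ! * f (k / n) := by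
  refine tsum_congr fun k => ?_
  rw [rpow_def_of_pos ha, div_pow, mul_div_assoc', mul_comm (log a), neg_mul, neg_div]
  ring

noncomputable def szaszRatio (a : ℝ) (n : ℕ) : ℝ := log a / n / (exp (log a / n) - 1)

theorem szasz_poisson_parameter_eq {a : ℝ} (ha : 0 < a) {n : ℕ} (hn : n ≠ 0) (x : ℝ) :
    x * log a / (a ^ ((1:ℝ)/n) - 1) = n * x * szaszRatio a n := by
  have hn' : (n : ℝ) ≠ 0 := Nat.cast_ne_zero.2 hn
  rw [szaszRatio, rpow_def_of_pos ha, mul_one_div]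
  field_simp

theorem sq_mul_szasz_central_pow_four {a : ℝ} (ha : 0 < a) {n : ℕ} (hn : n ≠ 0) (x : ℝ) :
    (n : ℝ) ^ 2 * szasz a n (fun t => (t - x) ^ 4) x =
      n ^ 2 * (1 - szaszRatio a n) ^ 4 * x ^ 4
        + 6 * n * szaszRatio a n * (1 - szaszRatio a n) ^ 2 * x ^ 3
        + (7 * szaszRatio a n ^ 2 - 4 * szaszRatio a n) * x ^ 2 + szaszRatio a n / n * x := by
  have hn' : (n : ℝ) ≠ 0 := Nat.cast_ne_zero.2 hn
  rw [szasz_eq_tsum_poisson ha, szasz_poisson_parameter_eq ha hn,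
    (hasSum_poisson_mul_div_sub_pow_four _ _ x).tsum_eq]
  field_simp
  ring

theorem szaszRatio_le_one {a : ℝ} (ha : 1 < a) {n : ℕ} (hn : n ≠ 0) : szaszRatio a n ≤ 1 := by
  have ht : 0 < log a / n := div_pos (log_pos ha) (Nat.cast_pos.2 (Nat.pos_of_ne_zero hn))
  rw [szaszRatio, div_le_one (by linarith [add_one_lt_exp ht.ne'])]
  linarith [add_one_le_exp (log a / n)]

theorem one_sub_szaszRatio_le {a : ℝ} (ha : 1 < a) {n : ℕ} (hn : n ≠ 0) :
    1 - szaszRatio a n ≤ log a / n := by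
  set t := log a / n
  have ht : 0 < t := div_pos (log_pos ha) (Nat.cast_pos.2 (Nat.pos_of_ne_zero hn))
  have hc : 0 < exp t - 1 := by linarith [add_one_lt_exp ht.ne']
  have key : exp t * (1 - t) ≤ 1 := by
    calc exp t * (1 - t) ≤ exp t * exp (-t) := by
          gcongr; linarith [add_one_le_exp (-t)]
      _ = 1 := by rw [← exp_add, add_neg_cancel, exp_zero]
  rw [szaszRatio, sub_le_comm, le_div_iff₀ hc]
  nlinarith

theorem szaszRatio_nonneg {a : ℝ} (ha : 1 < a) (n : ℕ) : 0 ≤ szaszRatio a n := by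
  have ht : 0 ≤ log a / n := div_nonneg (log_pos ha).le n.cast_nonneg
  exact div_nonneg ht (by linarith [add_one_le_exp (log a / n)])

theorem natCast_mul_one_sub_szaszRatio_le {a : ℝ} (ha : 1 < a) {n : ℕ} (hn : n ≠ 0) :
    n * (1 - szaszRatio a n) ≤ log a := by
  have hn' : (0 : ℝ) < n := Nat.cast_pos.2 (Nat.pos_of_ne_zero hn)
  calc n * (1 - szaszRatio a n) ≤ n * (log a / n) := by
        gcongr; exact one_sub_szaszRatio_le ha hn
    _ = log a := mul_div_cancel₀ _ hn'.ne'

theorem tendsto_szaszRatio {a : ℝ} (ha : 1 < a) : Tendsto (szaszRatio a) atTop (𝓝 1) := by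
  have hlow : Tendsto (fun n : ℕ => 1 - log a / n) atTop (𝓝 1) := by
    simpa using tendsto_const_nhds.sub (tendsto_const_div_atTop_nhds_zero_nat (log a))
  refine tendsto_of_tendsto_of_tendsto_of_le_of_le' hlow tendsto_const_nhds ?_ ?_ <;>
    filter_upwards [eventually_ne_atTop 0] with n hn
  · linarith [one_sub_szaszRatio_le ha hn]
  · exact szaszRatio_le_one ha hn

theorem tendsto_sq_mul_one_sub_szaszRatio_pow_four {a : ℝ} (ha : 1 < a) :
    Tendsto (fun n : ℕ => (n : ℝ) ^ 2 * (1 - szaszRatio a n) ^ 4) atTop (𝓝 0) := by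
  have hlim : Tendsto (fun n => log a ^ 2 * (1 - szaszRatio a n) ^ 2) atTop (𝓝 0) := by
    simpa using (((tendsto_szaszRatio ha).const_sub 1).pow 2).const_mul (log a ^ 2)
  refine squeeze_zero' (Eventually.of_forall fun n => by positivity) ?_ hlim
  filter_upwards [eventually_ne_atTop 0] with n hn
  have hu := natCast_mul_one_sub_szaszRatio_le ha hn
  have hv := sub_nonneg.2 (szaszRatio_le_one ha hn)
  calc (n : ℝ) ^ 2 * (1 - szaszRatio a n) ^ 4
      = (n * (1 - szaszRatio a n)) ^ 2 * (1 - szaszRatio a n) ^ 2 := by ring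
    _ ≤ log a ^ 2 * (1 - szaszRatio a n) ^ 2 := by gcongr

theorem tendsto_mul_szaszRatio_mul_one_sub_szaszRatio_sq {a : ℝ} (ha : 1 < a) :
    Tendsto (fun n : ℕ => 6 * n * szaszRatio a n * (1 - szaszRatio a n) ^ 2) atTop (𝓝 0) := by
  have hlim : Tendsto (fun n => 6 * log a * (1 - szaszRatio a n)) atTop (𝓝 0) := by
    simpa using ((tendsto_szaszRatio ha).const_sub 1).const_mul (6 * log a)
  have hρ := szaszRatio_nonneg ha
  refine squeeze_zero' (Eventually.of_forall fun n => by have := hρ n; positivity) ?_ hlim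
  filter_upwards [eventually_ne_atTop 0] with n hn
  have hu := natCast_mul_one_sub_szaszRatio_le ha hn
  have hv := sub_nonneg.2 (szaszRatio_le_one ha hn)
  calc 6 * n * szaszRatio a n * (1 - szaszRatio a n) ^ 2
      = 6 * (n * (1 - szaszRatio a n)) * szaszRatio a n * (1 - szaszRatio a n) := by ring
    _ ≤ 6 * log a * 1 * (1 - szaszRatio a n) := by
        have := log_pos ha
        have := hρ n
        have := szaszRatio_le_one ha hn
        gcongr
    _ = 6 * log a * (1 - szaszRatio a n) := by ring

theorem tendstoUniformlyOn_mul_of_abs_le {α ι : Type*} {l : Filter ι} {c : ι → ℝ} {c₀ : ℝ}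
    {g : α → ℝ} {s : Set α} {B : ℝ} (hc : Tendsto c l (𝓝 c₀)) (hg : ∀ x ∈ s, |g x| ≤ B) :
    TendstoUniformlyOn (fun i x => c i * g x) (fun x => c₀ * g x) l s := by
  rw [Metric.tendstoUniformlyOn_iff]
  intro ε hε
  have hB : 0 < |B| + 1 := by positivity
  filter_upwards [Metric.tendsto_nhds.1 hc (ε / (|B| + 1)) (by positivity)] with i hi x hx
  rw [dist_comm, Real.dist_eq, ← sub_mul, abs_mul]
  calc |c i - c₀| * |g x| ≤ |c i - c₀| * (|B| + 1) := by
        gcongr; linarith [hg x hx, le_abs_self B]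
    _ < ε / (|B| + 1) * (|B| + 1) := by gcongr; rwa [← Real.dist_eq]
    _ = ε := div_mul_cancel₀ ε hB.ne'

theorem stmt_12_general (a : ℝ) (ha : 1 < a) (b : ℝ) :
    TendstoUniformlyOn
      (fun (n : ℕ) (x : ℝ) => (n : ℝ) ^ 2 * szasz a n (fun t => (t - x) ^ 4) x)
      (fun x => 3 * x ^ 2) Filter.atTop (Set.Icc 0 b) := by
  have hρ := tendsto_szaszRatio ha
  have hpow (i : ℕ) : ∀ x ∈ Icc 0 b, |x ^ i| ≤ b ^ i := fun x hx => by
    rw [abs_of_nonneg (pow_nonneg hx.1 i)]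
    exact pow_le_pow_left₀ hx.1 hx.2 i
  have hquad : Tendsto (fun n => 7 * szaszRatio a n ^ 2 - 4 * szaszRatio a n) atTop (𝓝 3) := by
    convert ((hρ.pow 2).const_mul 7).sub (hρ.const_mul 4) using 2
    norm_num
  have hlin : Tendsto (fun n : ℕ => szaszRatio a n / n) atTop (𝓝 0) :=
    hρ.div_atTop tendsto_natCast_atTop_atTop
  have hpoly := (((tendstoUniformlyOn_mul_of_abs_le
    (tendsto_sq_mul_one_sub_szaszRatio_pow_four ha) (hpow 4)).fun_add
    (tendstoUniformlyOn_mul_of_abs_le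
      (tendsto_mul_szaszRatio_mul_one_sub_szaszRatio_sq ha) (hpow 3))).fun_add
    (tendstoUniformlyOn_mul_of_abs_le hquad (hpow 2))).fun_add
    (tendstoUniformlyOn_mul_of_abs_le hlin (hpow 1))
  refine (hpoly.congr ?_).congr_right fun x _ => by ring
  filter_upwards [eventually_ne_atTop 0] with n hn x _
  simpa only [pow_one] using (sq_mul_szasz_central_pow_four (by linarith) hn x).symm

theorem stmt_12 (a : ℝ) (ha : 1 < a) (b : ℝ) (hb : 0 < b) :
    TendstoUniformlyOn
      (fun (n : ℕ) (x : ℝ) => (n : ℝ) ^ 2 * szasz a n (fun t => (t - x) ^ 4) x)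
      (fun x => 3 * x ^ 2) Filter.atTop (Set.Icc 0 b) :=
  stmt_12_general a ha b
end

section
/- For the Kantorovich-type operators S̃*_{n,a} and each i ∈ {0,1,2}, lim_{n→∞} S̃*_{n,a}(e_i; x) = x^i for every x ≥ 0. -/
open Real

noncomputable def kant (a : ℝ) (n : ℕ) (f : ℝ → ℝ) (x : ℝ) : ℝ :=
  (n : ℝ) * ∑' k : ℕ, a ^ (-x / (a ^ ((1:ℝ)/n) - 1)) *
    (x * Real.log a) ^ k / ((a ^ ((1:ℝ)/n) - 1) ^ k * (Nat.factorial k : ℝ)) *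
    ∫ t in ((k : ℝ)/n)..(((k : ℝ) + 1)/n), f t

/-!
After the substitution `u = x log a / (a^(1/n) - 1)`, the operator averages `f` over `[k/n, (k+1)/n]`
against the Poisson weights `e^{-u} u^k / k!`. For `f = tⁱ` with `i ≤ 2` the average is a
polynomial of degree `≤ 2` in `k`, so the Poisson moments `∑ kʲ uᵏ/k!` (`j ≤ 2`) give closed forms
in `u/n` and `1/n`. Finally `n (a^(1/n) - 1) → log a` (the derivative of `t ↦ aᵗ` at `0`), so
`u/n → x`.
-/

open Filter Topology Nat

noncomputable def kantParam (a x : ℝ) (n : ℕ) : ℝ := x * log a / (a ^ ((1:ℝ)/n) - 1)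

section PoissonMoments

variable (u : ℝ)

lemma hasSum_pow_div_factorial : HasSum (fun k : ℕ => u ^ k / k !) (exp u) := by
  rw [exp_eq_exp_ℝ]
  exact NormedSpace.expSeries_div_hasSum_exp u

lemma hasSum_mul_pow_div_factorial :
    HasSum (fun k : ℕ => (k : ℝ) * (u ^ k / k !)) (u * exp u) := by
  rw [← hasSum_nat_add_iff' 1]
  simp only [Finset.sum_range_one, Nat.cast_zero, zero_mul, sub_zero]
  refine ((hasSum_pow_div_factorial u).mul_left u).congr_fun fun k => ?_
  rw [factorial_succ]
  push_cast
  field_simp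
  ring

lemma hasSum_sq_mul_pow_div_factorial :
    HasSum (fun k : ℕ => (k : ℝ) ^ 2 * (u ^ k / k !)) ((u ^ 2 + u) * exp u) := by
  rw [← hasSum_nat_add_iff' 1]
  simp only [Finset.sum_range_one, Nat.cast_zero, zero_pow two_ne_zero, zero_mul, sub_zero]
  have h := ((hasSum_mul_pow_div_factorial u).add (hasSum_pow_div_factorial u)).mul_left u
  rw [show u * (u * exp u + exp u) = (u ^ 2 + u) * exp u by ring] at h
  refine h.congr_fun fun k => ?_
  rw [factorial_succ]
  push_cast
  field_simp
  ring

end PoissonMoments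

section ClosedForms

variable {a : ℝ} (ha : 0 < a) {n : ℕ} (hn : n ≠ 0) (x : ℝ)
include ha hn

lemma kant_pow_eq {i : ℕ} {s : ℝ}
    (hs : HasSum (fun k : ℕ => (((k : ℝ) + 1) ^ (i + 1) - (k : ℝ) ^ (i + 1)) *
      (kantParam a x n ^ k / k !)) s) :
    kant a n (fun t => t ^ i) x = exp (-kantParam a x n) * s / ((i + 1) * n ^ i) := by
  have hn' : (n : ℝ) ≠ 0 := Nat.cast_ne_zero.mpr hn
  have hweight : ∀ k : ℕ, a ^ (-x / (a ^ ((1:ℝ)/n) - 1)) * (x * log a) ^ k /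
      ((a ^ ((1:ℝ)/n) - 1) ^ k * k !) = exp (-kantParam a x n) * (kantParam a x n ^ k / k !) := by
    intro k
    rw [rpow_def_of_pos ha, kantParam, div_pow]
    ring_nf
  simp only [kant, hweight, integral_pow]
  rw [← hs.tsum_eq, ← tsum_mul_left, ← tsum_mul_left, ← tsum_div_const]
  refine tsum_congr fun k => ?_
  rw [div_pow, div_pow]
  field_simp
  ring

lemma kant_pow_zero : kant a n (fun t => t ^ 0) x = 1 := by
  rw [kant_pow_eq ha hn x ((hasSum_pow_div_factorial _).congr_fun fun k => by ring), exp_neg]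
  field_simp
  simp

lemma kant_pow_one :
    kant a n (fun t => t ^ 1) x = kantParam a x n / n + 1 / 2 * (1 / n) := by
  set u := kantParam a x n
  have hs := ((hasSum_mul_pow_div_factorial u).mul_left 2).add (hasSum_pow_div_factorial u)
  rw [kant_pow_eq ha hn x (hs.congr_fun fun k => by ring), exp_neg]
  field_simp
  ring

lemma kant_pow_two :
    kant a n (fun t => t ^ 2) x =
      (kantParam a x n / n) ^ 2 + 2 * (kantParam a x n / n * (1 / n)) + 1 / 3 * (1 / n) ^ 2 := by
  set u := kantParam a x n
  have hs := ((hasSum_sq_mul_pow_div_factorial u).mul_left 3).add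
    (((hasSum_mul_pow_div_factorial u).mul_left 3).add (hasSum_pow_div_factorial u))
  rw [kant_pow_eq ha hn x (hs.congr_fun fun k => by ring), exp_neg]
  field_simp
  ring

end ClosedForms

lemma tendsto_nat_mul_rpow_one_div_sub_one {a : ℝ} (ha : 0 < a) :
    Tendsto (fun n : ℕ => n * (a ^ ((1:ℝ)/n) - 1)) atTop (𝓝 (log a)) := by
  have hderiv : HasDerivAt (fun t : ℝ => a ^ t) (log a) 0 := by
    simpa using (hasStrictDerivAt_const_rpow ha 0).hasDerivAt
  have hinv : Tendsto (fun n : ℕ => (1:ℝ) / n) atTop (𝓝[≠] 0) := by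
    refine tendsto_nhdsWithin_of_tendsto_nhds_of_eventually_within _
      tendsto_one_div_atTop_nhds_zero_nat ?_
    filter_upwards [eventually_ne_atTop 0] with n hn
    simpa using hn
  refine ((hasDerivAt_iff_tendsto_slope.mp hderiv).comp hinv).congr' ?_
  filter_upwards [eventually_ne_atTop 0] with n hn
  simp [slope_def_field, mul_comm]

lemma tendsto_kantParam_div_nat {a : ℝ} (ha₀ : 0 < a) (ha₁ : a ≠ 1) (x : ℝ) :
    Tendsto (fun n : ℕ => kantParam a x n / n) atTop (𝓝 x) := by
  have hlog : log a ≠ 0 := log_ne_zero_of_pos_of_ne_one ha₀ ha₁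
  have h := (tendsto_const_nhds (x := x * log a)).div
    (tendsto_nat_mul_rpow_one_div_sub_one ha₀) hlog
  rw [mul_div_cancel_right₀ x hlog] at h
  refine h.congr fun n => ?_
  rw [Pi.div_apply, kantParam, div_div, mul_comm (n : ℝ)]

theorem stmt_18_general (a : ℝ) (ha : 1 < a) (x : ℝ) :
    ∀ i : ℕ, i ≤ 2 →
      Filter.Tendsto (fun n : ℕ => kant a n (fun t => t ^ i) x)
        Filter.atTop (nhds (x ^ i)) := by
  have ha₀ : 0 < a := zero_lt_one.trans ha
  have hc := tendsto_kantParam_div_nat ha₀ ha.ne' x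
  have hh : Tendsto (fun n : ℕ => (1:ℝ) / n) atTop (𝓝 0) := tendsto_one_div_atTop_nhds_zero_nat
  have hn : ∀ᶠ n : ℕ in atTop, n ≠ 0 := eventually_ne_atTop 0
  intro i hi
  interval_cases i
  · simpa using tendsto_const_nhds.congr' (hn.mono fun n hn => (kant_pow_zero ha₀ hn x).symm)
  · simpa using (hc.add (hh.const_mul _)).congr' (hn.mono fun n hn => (kant_pow_one ha₀ hn x).symm)
  · simpa using ((hc.pow 2).add ((hc.mul hh).const_mul 2) |>.add ((hh.pow 2).const_mul _)).congr'
      (hn.mono fun n hn => (kant_pow_two ha₀ hn x).symm)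

theorem stmt_18 (a : ℝ) (ha : 1 < a) (x : ℝ) (hx : 0 ≤ x) :
    ∀ i : ℕ, i ≤ 2 →
      Filter.Tendsto (fun n : ℕ => kant a n (fun t => t ^ i) x)
        Filter.atTop (nhds (x ^ i)) :=
  stmt_18_general a ha x
end
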